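/- arXiv:2306.17539 — 4 statements merged into one kernel-verified Lean document; each statement's English description precedes it below -/
import Mathlib

section
/- Let L be a free ℤ-module of rank 2 equipped with a symmetric bilinear form B : L × L → ℤ, and let σ : L → L be a ℤ-linear automorphism with σ³ = id, whose only fixed point is 0, and which is an isometry of B (B(σx, σy) = B(x, y) for all x, y). Then there exist a ℤ-basis (v, w) of L and an integer m such that B(v,v) = 2m, B(w,w) = 2m and B(v,w) = −m; that is, the Gram matrix of B in this basis is m times the Gram matrix [[2,−1],[−1,2]] of the root lattice A₂. -/
/-!
Since `x + σ x + σ² x` is fixed by `σ`, fixed-point-freeness gives `σ² + σ + 1 = 0`, so `L` is a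
module over `ℤ[ω]`, `ω² + ω + 1 = 0`. It is free of rank one over this Euclidean ring: in a
`ℤ`-basis, `det (v, σ v)` is a binary quadratic form of discriminant `-3` in the coordinates of `v`,
and such a form represents `±1` (reduce its middle coefficient modulo twice the first one and
descend). For such a `v`, `(v, σ v)` is a `ℤ`-basis, and its Gram matrix is a multiple of that of
`A₂` because `B (v, σ² v) = B (σ v, v)` and `B (v, v + σ v + σ² v) = 0`.
-/

theorem exists_eq_one_of_discr_eq_neg_three (a b c : ℤ) (ha : 0 < a)
    (hd : b ^ 2 - 4 * a * c = -3) : ∃ x y : ℤ, a * x ^ 2 + b * x * y + c * y ^ 2 = 1 := by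
  lift a to ℕ using ha.le
  induction a using Nat.strong_induction_on generalizing b c with
  | _ a ih =>
  obtain rfl | ha2 : a = 1 ∨ 2 ≤ a := by omega
  · exact ⟨1, 0, by linear_combination⟩
  -- Pass to `f (X + t Y, Y) = a X² + k X Y + a' Y²` with `|k| ≤ a`; then `0 < a' < a`.
  set t := -b.bdiv (2 * a)
  set k : ℤ := 2 * a * t + b
  set a' : ℤ := a * t ^ 2 + b * t + c
  have hk : k = b.bmod (2 * a) := by
    have := b.bmod_add_bdiv (2 * a)
    push_cast at this
    linear_combination -this
  have hk_le : |k| ≤ a := by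
    have h1 := Int.le_bmod (x := b) (m := 2 * a) (by omega)
    have h2 := Int.bmod_le (x := b) (m := 2 * a) (by omega)
    push_cast at h1 h2
    rw [abs_le, hk]
    omega
  have ha' : 4 * a * a' = k ^ 2 + 3 := by linear_combination -hd
  have ha'_pos : 0 < a' := by nlinarith
  have ha'_lt : a' < a := by nlinarith [sq_abs k, abs_nonneg k]
  lift a' to ℕ using ha'_pos.le with n hn
  obtain ⟨x, y, hxy⟩ := ih n (by omega) k a (by omega) (by linear_combination -ha')
  exact ⟨y + t * x, x, by linear_combination hxy - x ^ 2 * hn⟩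

theorem exists_isUnit_of_discr_eq_neg_three (a b c : ℤ) (hd : b ^ 2 - 4 * a * c = -3) :
    ∃ x y : ℤ, IsUnit (a * x ^ 2 + b * x * y + c * y ^ 2) := by
  rcases lt_trichotomy a 0 with ha | rfl | ha
  · obtain ⟨x, y, hxy⟩ :=
      exists_eq_one_of_discr_eq_neg_three (-a) (-b) (-c) (by omega) (by linear_combination hd)
    exact ⟨x, y, Int.isUnit_iff.mpr (.inr (by linear_combination -hxy))⟩
  · nlinarith [sq_nonneg b]
  · obtain ⟨x, y, hxy⟩ := exists_eq_one_of_discr_eq_neg_three a b c ha hd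
    exact ⟨x, y, hxy ▸ isUnit_one⟩

theorem Matrix.discr_eq_neg_three_of_mul_self_add_self_add_one_eq_zero
    {M : Matrix (Fin 2) (Fin 2) ℤ} (hM : M * M + M + 1 = 0) :
    (M 1 1 - M 0 0) ^ 2 + 4 * M 0 1 * M 1 0 = -3 := by
  have entry (i j : Fin 2) :
      M i 0 * M 0 j + M i 1 * M 1 j + M i j + (1 : Matrix (Fin 2) (Fin 2) ℤ) i j = 0 := by
    simpa [mul_apply] using congrFun (congrFun hM i) j
  have h00 : M 0 0 * M 0 0 + M 0 1 * M 1 0 + M 0 0 + 1 = 0 := by simpa using entry 0 0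
  have h01 : M 0 0 * M 0 1 + M 0 1 * M 1 1 + M 0 1 = 0 := by simpa using entry 0 1
  -- Otherwise `M` is a scalar matrix, and `X² + X + 1` has no integer root.
  have htr : M 0 0 + M 1 1 + 1 = 0 := by
    by_contra htr
    have hb : M 0 1 = 0 :=
      (mul_eq_zero.mp (by linear_combination h01 : M 0 1 * (M 0 0 + M 1 1 + 1) = 0)).resolve_right
        htr
    rw [hb] at h00
    nlinarith [sq_nonneg (2 * M 0 0 + 1)]
  linear_combination (M 1 1 - 3 * M 0 0 - 1) * htr + 4 * h00

theorem Module.Basis.exists_basis_one_eq_apply_zero {L : Type*} [AddCommGroup L] [Module ℤ L]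
    (e : Basis (Fin 2) ℤ L) {f : End ℤ L} (hf : f * f + f + 1 = 0) :
    ∃ b : Basis (Fin 2) ℤ L, b 1 = f (b 0) := by
  set M := LinearMap.toMatrix e e f
  have hM : M * M + M + 1 = 0 := by
    simpa [M, ← LinearMap.toMatrix_mul] using congrArg (LinearMap.toMatrix e e) hf
  obtain ⟨x, y, hxy⟩ := exists_isUnit_of_discr_eq_neg_three (M 1 0) (M 1 1 - M 0 0) (-M 0 1)
    (by linear_combination Matrix.discr_eq_neg_three_of_mul_self_add_self_add_one_eq_zero hM)
  set v := e.equivFun.symm ![x, y]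
  have hcoords : e.toMatrix ![v, f v] = !![x, M 0 0 * x + M 0 1 * y; y, M 1 0 * x + M 1 1 * y] := by
    ext i j
    fin_cases i <;> fin_cases j <;> simp [toMatrix_apply, v, M, LinearMap.toMatrix_apply] <;> ring
  have hdet : e.det ![v, f v] = M 1 0 * x ^ 2 + (M 1 1 - M 0 0) * x * y + -M 0 1 * y ^ 2 := by
    rw [e.det_apply, hcoords, Matrix.det_fin_two_of]
    ring
  obtain ⟨hli, hspan⟩ := e.is_basis_iff_det.mpr (hdet ▸ hxy)
  exact ⟨.mk hli hspan.ge, by simp⟩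

theorem LinearEquiv.apply_apply_add_apply_add_self_eq_zero {R M : Type*} [Semiring R]
    [AddCommMonoid M] [Module R M] {σ : M ≃ₗ[R] M} (h3 : σ ^ 3 = 1)
    (hfix : ∀ x : M, σ x = x → x = 0) (x : M) : σ (σ x) + σ x + x = 0 := by
  have hσ3 : σ (σ (σ x)) = x := by simpa [pow_succ] using LinearEquiv.congr_fun h3 x
  apply hfix
  rw [map_add, map_add, hσ3]
  abel

section Gram

variable {R M : Type*} [CommRing R] [AddCommGroup M] [Module R M] {B : M →ₗ[R] M →ₗ[R] R}
  {σ : M → M}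

theorem LinearMap.apply_apply_apply_eq_apply_apply (hsymm : ∀ x y, B x y = B y x)
    (hisom : ∀ x y, B (σ x) (σ y) = B x y) (hσ : ∀ x, σ (σ x) + σ x + x = 0) (v : M) :
    B v (σ (σ v)) = B v (σ v) := by
  have hσ3 : σ (σ (σ v)) = v := by
    linear_combination (norm := module) hσ (σ v) - hσ v
  rw [← hisom, hσ3, hsymm]

theorem LinearMap.apply_self_eq_neg_two_mul_apply_apply (hsymm : ∀ x y, B x y = B y x)
    (hisom : ∀ x y, B (σ x) (σ y) = B x y) (hσ : ∀ x, σ (σ x) + σ x + x = 0) (v : M) :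
    B v v = -2 * B v (σ v) := by
  have h := congrArg (B v) (hσ v)
  rw [map_add, map_add, apply_apply_apply_eq_apply_apply hsymm hisom hσ, map_zero] at h
  linear_combination h

end Gram

/-- Classification of rank-2 ℰ-lattices: if `L` is a free ℤ-module of rank 2 with a
symmetric bilinear form `B`, and `σ` is a fixed-point-free ℤ-linear automorphism of
order 3 which is an isometry of `B`, then there is a ℤ-basis `(v, w)` of `L` and an
integer `m` with `B(v,v) = 2m`, `B(w,w) = 2m`, `B(v,w) = −m`; i.e. the Gram matrix is
`m` times that of the root lattice `A₂`. -/
theorem rank_two_E_lattice_is_A2_up_to_scaling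
    (L : Type*) [AddCommGroup L] [Module ℤ L]
    [Module.Free ℤ L] [Module.Finite ℤ L]
    (hrk : Module.finrank ℤ L = 2)
    (B : L →ₗ[ℤ] L →ₗ[ℤ] ℤ)
    (hsymm : ∀ x y : L, B x y = B y x)
    (σ : L ≃ₗ[ℤ] L) (h3 : σ ^ 3 = 1)
    (hfix : ∀ x : L, σ x = x → x = 0)
    (hisom : ∀ x y : L, B (σ x) (σ y) = B x y) :
    ∃ (b : Module.Basis (Fin 2) ℤ L) (m : ℤ),
      B (b 0) (b 0) = 2 * m ∧ B (b 1) (b 1) = 2 * m ∧ B (b 0) (b 1) = -m := by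
  have hσ := σ.apply_apply_add_apply_add_self_eq_zero h3 hfix
  have hσ' : (σ : Module.End ℤ L) * σ + σ + 1 = 0 := LinearMap.ext hσ
  obtain ⟨b, hb : b 1 = σ (b 0)⟩ :=
    ((Module.finBasis ℤ L).reindex (finCongr hrk)).exists_basis_one_eq_apply_zero hσ'
  have hB := LinearMap.apply_self_eq_neg_two_mul_apply_apply hsymm hisom hσ
  refine ⟨b, -B (b 0) (b 1), ?_, ?_, by ring⟩
  · rw [hB, hb]
    ring
  · rw [hb, hisom, hB]
    ring
end

section
/- Let G be a symmetric 2×2 integer matrix whose two diagonal entries are even, which is positive definite, and such that 3·G⁻¹ has integer entries (i.e. there exists an integer matrix N with G·N = 3·I). Then G is integrally congruent to the Gram matrix of A₂: there exists a matrix P ∈ GL₂(ℤ) with Pᵀ G P = [[2,−1],[−1,2]]. -/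
/-!
Positive definiteness and `G * N = 3 • 1` give `0 < det G ∣ 9`, while even diagonal entries
force `det G = ac - b² ≡ 0, 3 (mod 4)`; hence `det G = 3`. Lagrange–Gauss reduction (a shear
`e₂ ↦ e₂ ± e₁`, possibly after swapping the basis vectors, lowers `a + c` as long as `2|b|`
exceeds `a` or `c`) brings `G` to a form with `2|b| ≤ a, c`. Then `3ac/4 ≤ ac - b² = 3`, so
`a = c = 2` and `b = ±1`.
-/

open Matrix

def IntCongruent {n : Type*} [Fintype n] [DecidableEq n] (G H : Matrix n n ℤ) : Prop :=
  ∃ P : Matrix n n ℤ, IsUnit P.det ∧ Pᵀ * G * P = H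

namespace IntCongruent

variable {n : Type*} [Fintype n] [DecidableEq n] {G H K : Matrix n n ℤ}

theorem refl (G : Matrix n n ℤ) : IntCongruent G G :=
  ⟨1, by simp, by simp⟩

theorem trans (hGH : IntCongruent G H) (hHK : IntCongruent H K) : IntCongruent G K := by
  obtain ⟨P, hP, rfl⟩ := hGH
  obtain ⟨Q, hQ, rfl⟩ := hHK
  refine ⟨P * Q, by simpa only [det_mul] using hP.mul hQ, ?_⟩
  simp only [transpose_mul, Matrix.mul_assoc]

theorem det_eq (h : IntCongruent G H) : H.det = G.det := by
  obtain ⟨P, hP, rfl⟩ := h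
  rw [det_mul, det_mul, det_transpose, mul_right_comm, ← sq, Int.isUnit_sq hP, one_mul]

end IntCongruent

theorem dotProduct_mulVec_fin_two {R : Type*} [CommRing R] (a b c x y : R) :
    ![x, y] ⬝ᵥ (!![a, b; b, c] *ᵥ ![x, y]) = a * x ^ 2 + 2 * b * x * y + c * y ^ 2 := by
  simp only [dotProduct, mulVec, of_apply, cons_val', cons_val_fin_one, Fin.sum_univ_two,
    cons_val_zero, cons_val_one]
  ring

theorem det_fin_two_symm_of (a b c : ℤ) : (!![a, b; b, c]).det = a * c - b ^ 2 := by
  rw [det_fin_two_of, sq]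

theorem intCongruent_shear {a b c b' c' : ℤ} (k : ℤ) (hb' : b' = b + k * a)
    (hc' : c' = c + 2 * k * b + k ^ 2 * a) : IntCongruent !![a, b; b, c] !![a, b'; b', c'] := by
  subst hb' hc'
  refine ⟨!![1, k; 0, 1], by simp, ?_⟩
  ext i j; fin_cases i <;> fin_cases j <;> simp [mul_apply, Fin.sum_univ_two] <;> ring

theorem intCongruent_swap (a b c : ℤ) : IntCongruent !![a, b; b, c] !![c, b; b, a] :=
  ⟨!![0, 1; 1, 0], by simp, by
    ext i j; fin_cases i <;> fin_cases j <;> simp [mul_apply, Fin.sum_univ_two]⟩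

theorem intCongruent_neg (a b c : ℤ) : IntCongruent !![a, b; b, c] !![a, -b; -b, c] :=
  ⟨!![1, 0; 0, -1], by simp, by
    ext i j; fin_cases i <;> fin_cases j <;> simp [mul_apply, Fin.sum_univ_two]⟩

theorem exists_intCongruent_sub_two_abs (a b c : ℤ) :
    ∃ b', IntCongruent !![a, b; b, c] !![a, b'; b', c - 2 * |b| + a] := by
  rcases le_or_gt 0 b with hb | hb
  · exact ⟨b - a, intCongruent_shear (-1) (by ring) (by rw [abs_of_nonneg hb]; ring)⟩
  · exact ⟨b + a, intCongruent_shear 1 (by ring) (by rw [abs_of_neg hb]; ring)⟩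

theorem pos_and_det_pos_of_posDef {R : Type*} [CommRing R] [LinearOrder R] [IsStrictOrderedRing R]
    {a b c : R} (h : ∀ x : Fin 2 → R, x ≠ 0 → 0 < x ⬝ᵥ (!![a, b; b, c] *ᵥ x)) :
    0 < a ∧ 0 < a * c - b ^ 2 := by
  have ha : 0 < a := by
    have := h ![1, 0] (by simp [funext_iff])
    rw [dotProduct_mulVec_fin_two] at this
    linarith
  have had : 0 < a * (a * c - b ^ 2) := by
    have := h ![b, -a] (by simp [funext_iff, ha.ne'])
    rw [dotProduct_mulVec_fin_two] at this
    linarith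
  exact ⟨ha, (pos_iff_pos_of_mul_pos had).mp ha⟩

theorem det_dvd_pow_of_mul_eq_smul_one {n R : Type*} [Fintype n] [DecidableEq n] [CommRing R]
    {G N : Matrix n n R} {k : R} (h : G * N = k • 1) : G.det ∣ k ^ Fintype.card n :=
  ⟨N.det, by rw [← det_mul, h, det_smul, det_one, mul_one]⟩

theorem mul_sub_sq_eq_three_of_dvd_nine {a b c : ℤ} (ha : Even a) (hc : Even c)
    (hpos : 0 < a * c - b ^ 2) (hdvd : a * c - b ^ 2 ∣ 9) : a * c - b ^ 2 = 3 := by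
  have hmod : (a * c - b ^ 2) % 4 = 0 ∨ (a * c - b ^ 2) % 4 = 3 := by
    obtain ⟨x, rfl⟩ := ha
    obtain ⟨y, rfl⟩ := hc
    obtain ⟨t, rfl | rfl⟩ := Int.even_or_odd' b
    · left; rw [show (x + x) * (y + y) - (2 * t) ^ 2 = 4 * (x * y - t ^ 2) by ring]; omega
    · right
      rw [show (x + x) * (y + y) - (2 * t + 1) ^ 2 = 4 * (x * y - t ^ 2 - t) - 1 by ring]; omega
  have h9 := Int.le_of_dvd (by norm_num) hdvd
  generalize a * c - b ^ 2 = d at *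
  interval_cases d <;> omega

def A₂ : Matrix (Fin 2) (Fin 2) ℤ := !![2, -1; -1, 2]

theorem intCongruent_A₂_of_reduced {a b c : ℤ} (ha : Even a) (hc : Even c) (ha0 : 0 < a)
    (hba : 2 * |b| ≤ a) (hbc : 2 * |b| ≤ c) (hdet : a * c - b ^ 2 = 3) :
    IntCongruent !![a, b; b, c] A₂ := by
  have two_le : ∀ x : ℤ, Even x → 0 < x → 2 ≤ x := by
    rintro x ⟨y, rfl⟩ hx; omega
  have hb4 : 4 * b ^ 2 ≤ a * c := by
    rw [← sq_abs]; nlinarith [abs_nonneg b]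
  have hc0 : 0 < c := by nlinarith
  have ha2 := two_le a ha ha0
  have hc2 := two_le c hc hc0
  obtain ⟨rfl, rfl⟩ : a = 2 ∧ c = 2 := by constructor <;> nlinarith
  obtain ⟨hb1, hb1'⟩ := abs_le.mp (show |b| ≤ 1 by linarith)
  interval_cases b
  · exact .refl _
  · norm_num at hdet
  · exact intCongruent_neg 2 1 2

theorem intCongruent_A₂_of_det_eq_three (a b c : ℤ) (ha : Even a) (hc : Even c) (ha0 : 0 < a)
    (hdet : a * c - b ^ 2 = 3) : IntCongruent !![a, b; b, c] A₂ := by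
  have hc0 : 0 < c := by nlinarith
  by_cases hab : a < 2 * |b|
  · obtain ⟨b', h⟩ := exists_intCongruent_sub_two_abs a b c
    have hdet' := h.det_eq
    rw [det_fin_two_symm_of, det_fin_two_symm_of] at hdet'
    exact h.trans (intCongruent_A₂_of_det_eq_three a b' (c - 2 * |b| + a) ha
      ((hc.sub (even_two_mul _)).add ha) ha0 (by linarith))
  by_cases hcb : c < 2 * |b|
  · obtain ⟨b', h⟩ := exists_intCongruent_sub_two_abs c b a
    have hdet' := h.det_eq
    rw [det_fin_two_symm_of, det_fin_two_symm_of] at hdet'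
    exact (intCongruent_swap a b c).trans <| h.trans <|
      intCongruent_A₂_of_det_eq_three c b' (a - 2 * |b| + c) hc
        ((ha.sub (even_two_mul _)).add hc) hc0 (by linarith)
  exact intCongruent_A₂_of_reduced ha hc ha0 (not_lt.mp hab) (not_lt.mp hcb) hdet
termination_by (a + c).toNat

/-- The definite half of the classification of rank-2 3-elementary even lattices:
a symmetric positive definite 2×2 integer matrix `G` with even diagonal such that
`3·G⁻¹` is integral is integrally congruent to the Gram matrix of `A₂`. -/
theorem posdef_even_three_elementary_rank_two_is_A2
    (G : Matrix (Fin 2) (Fin 2) ℤ)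
    (hsymm : G.IsSymm)
    (heven : Even (G 0 0) ∧ Even (G 1 1))
    (hposdef : ∀ x : Fin 2 → ℤ, x ≠ 0 → 0 < dotProduct x (G.mulVec x))
    (helem : ∃ N : Matrix (Fin 2) (Fin 2) ℤ, G * N = 3 • (1 : Matrix (Fin 2) (Fin 2) ℤ)) :
    ∃ P : Matrix (Fin 2) (Fin 2) ℤ, IsUnit P.det ∧
      Pᵀ * G * P = !![2, -1; -1, 2] := by
  obtain ⟨N, hN⟩ := helem
  have hG := eta_fin_two G
  rw [hsymm.apply 0 1] at hG
  rw [hG] at hposdef hN ⊢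
  obtain ⟨ha, hdet⟩ := pos_and_det_pos_of_posDef hposdef
  have hdvd := det_dvd_pow_of_mul_eq_smul_one hN
  rw [det_fin_two_symm_of] at hdvd
  norm_num at hdvd
  exact intCongruent_A₂_of_det_eq_three _ _ _ heven.1 heven.2 ha
    (mul_sub_sq_eq_three_of_dvd_nine heven.1 heven.2 hdet hdvd)
end

section
/- There are no integers x₁, x₂, y₁, y₂ satisfying 3·x₁·x₂ − y₁² + y₁·y₂ − y₂² = 1. -/
/-- The lattice `U(3) ⊕ A₂(−1)` contains no vector of square 2: there are no integers
`x₁, x₂, y₁, y₂` with `3x₁x₂ − y₁² + y₁y₂ − y₂² = 1`. -/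
theorem no_square_two_in_U3_A2 :
    ¬ ∃ x₁ x₂ y₁ y₂ : ℤ, 3 * x₁ * x₂ - y₁ ^ 2 + y₁ * y₂ - y₂ ^ 2 = 1 := by
  rintro ⟨x₁, x₂, y₁, y₂, h⟩
  have h3 : ((3 * x₁ * x₂ - y₁ ^ 2 + y₁ * y₂ - y₂ ^ 2 : ℤ) : ZMod 3) = 1 := by
    rw [h]; norm_num
  push_cast at h3
  have : (3 : ZMod 3) = 0 := by decide
  rw [this] at h3
  revert h3
  simp only [zero_mul]
  generalize (y₁ : ZMod 3) = a
  generalize (y₂ : ZMod 3) = b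
  revert a b
  decide
end

section
/- There are no integers a, f, e₁, e₂ satisfying simultaneously: a·f + e₁·e₂ = a² + e₁² + e₂² + 1, and f − 2a > 0, and −2e₁ + e₂ > 0, and e₁ − 2e₂ > 0, and a + e₁ + e₂ > 0. -/
/-- The lattice `U ⊕ A₂(−1)` admits no ample class of square 2: there are no integers
`a, f, e₁, e₂` with `af + e₁e₂ = a² + e₁² + e₂² + 1`, `f − 2a > 0`, `−2e₁ + e₂ > 0`,
`e₁ − 2e₂ > 0` and `a + e₁ + e₂ > 0`. -/
theorem no_ample_square_two_in_U_A2 :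
    ¬ ∃ a f e₁ e₂ : ℤ,
      a * f + e₁ * e₂ = a ^ 2 + e₁ ^ 2 + e₂ ^ 2 + 1 ∧
      f - 2 * a > 0 ∧
      -2 * e₁ + e₂ > 0 ∧
      e₁ - 2 * e₂ > 0 ∧
      a + e₁ + e₂ > 0 := by
  rintro ⟨a, f, e₁, e₂, heq, hf, h1, h2, h3⟩
  have he1 : e₁ ≤ -1 := by omega
  have he2 : e₂ ≤ -1 := by omega
  have ha : a ≥ 1 - e₁ - e₂ := by omega
  have hf' : f ≥ 2 * a + 1 := by omega
  have ha0 : a ≥ 3 := by omega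
  have key : a * f ≥ a * (2 * a + 1) := by
    apply mul_le_mul_of_nonneg_left hf' (by omega)
  nlinarith [sq_nonneg (a - (1 - e₁ - e₂)), mul_nonneg (by omega : (0:ℤ) ≤ a - (1 - e₁ - e₂)) (by omega : (0:ℤ) ≤ a + (1 - e₁ - e₂)), mul_nonneg (by omega : (0:ℤ) ≤ -1 - e₁) (by omega : (0:ℤ) ≤ -1 - e₂)]
end
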